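/- arXiv:2211.17266 — 2 statements merged into one kernel-verified Lean document; each statement's English description precedes it below -/
import Mathlib

section
/- Sharpness of the torus spectral projection bounds (Proposition 6.1 and Remark 6.2, specialized to the unit torus). Let n ≥ 2 and let q satisfy 2 < q ≤ q_c where q_c = 2(n+1)/(n−1). There exist constants c > 0 and C₀ ≥ 1, depending only on n and q, such that for every integer m ≥ C₀ and every real ε with C₀/m ≤ ε ≤ 1, setting λ = 2πm, there is a nonzero finitely supported a : ℤⁿ → ℂ with a_j = 0 unless λ ≤ 2π|j| ≤ λ + ε, such that ‖Σ_{j∈ℤⁿ} a_j e^{2πi⟨j,x⟩}‖_{L^q([0,1]ⁿ)} ≥ c (ελ)^{((n−1)/2)(1/2−1/q)} ‖Σ_{j∈ℤⁿ} a_j e^{2πi⟨j,x⟩}‖_{L²([0,1]ⁿ)}. Consequently the L²→L^q norm of the spectral projection onto the window [λ−ε, λ+ε] on the unit torus is at least c(ελ)^{((n−1)/2)(1/2−1/q)}, so the T^{−1/q_c} gain in the paper's torus theorem is optimal. -/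
open MeasureTheory

/-- The exponential `e_j(x) = exp(2πi⟨j,x⟩)` on the unit torus. -/
noncomputable def unitTorusExp (n : ℕ) (j : Fin n → ℤ)
    (x : EuclideanSpace ℝ (Fin n)) : ℂ :=
  Complex.exp (2 * Real.pi * Complex.I * (∑ i, (j i : ℝ) * x i))

/-- The fundamental domain `[0,1]ⁿ` of the unit torus. -/
def unitCube (n : ℕ) : Set (EuclideanSpace ℝ (Fin n)) :=
  {x | ∀ i, x i ∈ Set.Icc (0 : ℝ) 1}

/-- The `√(-Δ)`-eigenvalue `2π|j|` of `e_j` on the unit torus. -/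
noncomputable def unitTorusEigenvalue (n : ℕ) (j : Fin n → ℤ) : ℝ :=
  2 * Real.pi * Real.sqrt (∑ i, ((j i : ℝ)) ^ 2)

open scoped ENNReal NNReal

namespace TorusSharpAux
open Finset Real

lemma integral_exp_int (l : ℤ) :
    ∫ t in Set.Icc (0:ℝ) 1, Complex.exp (2 * Real.pi * Complex.I * l * t) =
      if l = 0 then 1 else 0 := by
  rw [MeasureTheory.integral_Icc_eq_integral_Ioc,
      ← intervalIntegral.integral_of_le (by norm_num : (0:ℝ) ≤ 1)]
  rcases eq_or_ne l 0 with rfl | hl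
  · simp
  · rw [if_neg hl]
    have hc : (2 * Real.pi * Complex.I * (l:ℂ)) ≠ 0 := by
      have : (l:ℂ) ≠ 0 := by exact_mod_cast hl
      simp [Real.pi_ne_zero, Complex.I_ne_zero, this]
    rw [integral_exp_mul_complex hc]
    have h1 : Complex.exp (2 * Real.pi * Complex.I * (l:ℂ) * 1) = 1 := by
      rw [mul_one]
      have := Complex.exp_int_mul_two_pi_mul_I l
      rw [← this]; ring_nf
    push_cast
    rw [h1]
    simp

noncomputable def D (K : ℕ) (t : ℝ) : ℂ :=
  ∑ k ∈ Finset.range K, Complex.exp (2 * Real.pi * Complex.I * k * t)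

lemma continuous_D (K : ℕ) : Continuous (D K) := by
  unfold D
  exact continuous_finset_sum _ fun k _ => Complex.continuous_exp.comp (by continuity)

lemma integral_normSq_D (K : ℕ) :
    ∫ t in Set.Icc (0:ℝ) 1, ‖D K t‖^2 = (K:ℝ) := by
  have hint : ∀ (l : ℤ), IntegrableOn
      (fun t : ℝ => Complex.exp (2 * Real.pi * Complex.I * (l:ℂ) * t)) (Set.Icc 0 1) volume := by
    intro l
    have : Continuous (fun t : ℝ => Complex.exp (2 * Real.pi * Complex.I * (l:ℂ) * t)) :=
      Complex.continuous_exp.comp (by continuity)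
    exact this.integrableOn_Icc
  have key : ∫ t in Set.Icc (0:ℝ) 1, (D K t * (starRingEnd ℂ) (D K t)) = (K:ℂ) := by
    have hexpand : ∀ t : ℝ, D K t * (starRingEnd ℂ) (D K t) =
        ∑ k ∈ Finset.range K, ∑ k' ∈ Finset.range K,
          Complex.exp (2 * Real.pi * Complex.I * ((((k:ℤ) - (k':ℤ)) : ℤ) : ℂ) * t) := by
      intro t
      unfold D
      rw [map_sum, Finset.sum_mul_sum]
      refine Finset.sum_congr rfl fun k _ => Finset.sum_congr rfl fun k' _ => ?_
      rw [← Complex.exp_conj, ← Complex.exp_add]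
      congr 1
      have : (starRingEnd ℂ) (2 * Real.pi * Complex.I * k' * t)
          = -(2 * Real.pi * Complex.I * k' * t) := by
        simp [Complex.ext_iff]
      rw [this]
      push_cast
      ring
    simp_rw [hexpand]
    rw [integral_finset_sum _ (fun k _ => (integrable_finset_sum _ (fun k' _ => hint _)))]
    have inner : ∀ k ∈ Finset.range K, (∫ t in Set.Icc (0:ℝ) 1, ∑ k' ∈ Finset.range K,
          Complex.exp (2 * Real.pi * Complex.I * ((((k:ℤ) - (k':ℤ)) : ℤ) : ℂ) * t))
        = 1 := by
      intro k hk
      rw [integral_finset_sum _ (fun k' _ => hint _)]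
      refine (Finset.sum_congr rfl fun (k' : ℕ) _ =>
        integral_exp_int ((k:ℤ) - (k':ℤ))).trans ?_
      simp only [sub_eq_zero, Int.natCast_inj]
      rw [Finset.sum_ite_eq (Finset.range K) k (fun _ => (1:ℂ))]
      simp [hk]
    refine (Finset.sum_congr rfl inner).trans ?_
    simp
  have hDc : Continuous fun t => D K t * (starRingEnd ℂ) (D K t) :=
    (continuous_D K).mul ((continuous_D K).star)
  have hre := integral_re (μ := volume.restrict (Set.Icc (0:ℝ) 1)) hDc.integrableOn_Icc
  rw [key] at hre
  have hpt : ∀ t : ℝ, RCLike.re (D K t * (starRingEnd ℂ) (D K t)) = ‖D K t‖^2 := by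
    intro t
    simp [RCLike.re_eq_complex_re, Complex.mul_conj, Complex.normSq_eq_norm_sq,
      ← Complex.ofReal_pow]
  rw [show (fun t : ℝ => RCLike.re (D K t * (starRingEnd ℂ) (D K t)))
      = fun t => ‖D K t‖^2 from funext hpt] at hre
  simpa using hre

lemma norm_exp_I_mul (r : ℝ) : ‖Complex.exp (2 * Real.pi * Complex.I * r)‖ = 1 := by
  rw [show (2 * Real.pi * Complex.I * r : ℂ) = ((2 * Real.pi * r : ℝ) : ℂ) * Complex.I by
    push_cast; ring]
  rw [Complex.norm_exp_ofReal_mul_I]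

lemma norm_D_ge (K : ℕ) {t : ℝ} (ht : t ∈ Set.Icc (0:ℝ) (1/(8*K))) :
    (K:ℝ) * (Real.sqrt 2 / 2) ≤ ‖D K t‖ := by
  have hre : (K:ℝ) * (Real.sqrt 2 / 2) ≤ (D K t).re := by
    unfold D
    rw [Complex.re_sum]
    have hterm : ∀ k ∈ Finset.range K,
        Real.sqrt 2 / 2 ≤ (Complex.exp (2 * Real.pi * Complex.I * k * t)).re := by
      intro k hk
      rw [show (2 * Real.pi * Complex.I * k * t : ℂ)
          = ((2 * Real.pi * k * t : ℝ) : ℂ) * Complex.I by push_cast; ring]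
      rw [Complex.exp_ofReal_mul_I_re]
      have hK0 : 0 < (K:ℝ) := by
        rcases Nat.eq_zero_or_pos K with h | h
        · subst h; simp at hk
        · exact_mod_cast h
      have ht0 : 0 ≤ t := ht.1
      have h1 : 0 ≤ 2 * Real.pi * k * t := by positivity
      have h2 : 2 * Real.pi * k * t ≤ Real.pi / 4 := by
        have hkK : (k:ℝ) ≤ K := by
          have := Finset.mem_range.mp hk; exact_mod_cast this.le
        have ht1 : t ≤ 1/(8*K) := ht.2
        have : 2 * Real.pi * k * t ≤ 2 * Real.pi * K * (1/(8*K)) := by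
          apply mul_le_mul
          · apply mul_le_mul_of_nonneg_left hkK (by positivity)
          · exact ht1
          · exact ht0
          · positivity
        calc 2 * Real.pi * k * t ≤ 2 * Real.pi * K * (1/(8*K)) := this
          _ = Real.pi / 4 := by field_simp; ring
      calc Real.sqrt 2 / 2 = Real.cos (Real.pi/4) := (Real.cos_pi_div_four).symm
        _ ≤ Real.cos (2 * Real.pi * k * t) := by
            apply Real.cos_le_cos_of_nonneg_of_le_pi h1 ?_ h2
            · linarith [Real.pi_pos]
    calc (K:ℝ) * (Real.sqrt 2 / 2) = ∑ _k ∈ Finset.range K, (Real.sqrt 2 / 2) := by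
          rw [Finset.sum_const, Finset.card_range]; ring
      _ ≤ ∑ k ∈ Finset.range K, (Complex.exp (2 * Real.pi * Complex.I * k * t)).re :=
          Finset.sum_le_sum hterm
  calc (K:ℝ) * (Real.sqrt 2 / 2) ≤ (D K t).re := hre
    _ ≤ ‖D K t‖ := Complex.re_le_norm _

lemma box_eq_preimage (n : ℕ) (w : Fin n → ℝ) :
    {x : EuclideanSpace ℝ (Fin n) | ∀ i, x i ∈ Set.Icc 0 (w i)}
      = ((MeasurableEquiv.toLp 2 (Fin n → ℝ)).symm) ⁻¹' (Set.univ.pi fun i => Set.Icc 0 (w i)) := by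
  ext x
  constructor
  · intro h i _
    exact h i
  · intro h i
    exact h i trivial

lemma indicator_pi_prod (n : ℕ) (s : Fin n → Set ℝ) (g : Fin n → ℝ → ℝ) (y : Fin n → ℝ) :
    Set.indicator (Set.univ.pi s) (fun y => ∏ i, g i (y i)) y
      = ∏ i, Set.indicator (s i) (g i) (y i) := by
  by_cases hy : y ∈ Set.univ.pi s
  · rw [Set.indicator_of_mem hy]
    exact Finset.prod_congr rfl fun i _ =>
      (Set.indicator_of_mem (hy i (Set.mem_univ i)) (g i)).symm
  · rw [Set.indicator_of_notMem hy]
    rw [Set.mem_pi] at hy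
    push_neg at hy
    obtain ⟨i, -, hi⟩ := hy
    exact (Finset.prod_eq_zero (Finset.mem_univ i)
      (Set.indicator_of_notMem hi (g i))).symm

lemma box_integral (n : ℕ) (g : Fin n → ℝ → ℝ) (w : Fin n → ℝ) :
    ∫ x in {x : EuclideanSpace ℝ (Fin n) | ∀ i, x i ∈ Set.Icc 0 (w i)}, ∏ i, g i (x i)
      = ∏ i, ∫ t in Set.Icc (0:ℝ) (w i), g i t := by
  rw [box_eq_preimage]
  have h := MeasurePreserving.setIntegral_preimage_emb
    (EuclideanSpace.volume_preserving_symm_measurableEquiv_toLp (Fin n))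
    ((MeasurableEquiv.toLp 2 (Fin n → ℝ)).symm).measurableEmbedding
    (fun y : Fin n → ℝ => ∏ i, g i (y i)) (Set.univ.pi fun i => Set.Icc 0 (w i))
  rw [show (fun x : EuclideanSpace ℝ (Fin n) =>
      ∏ i, g i (((MeasurableEquiv.toLp 2 (Fin n → ℝ)).symm x) i))
      = fun x : EuclideanSpace ℝ (Fin n) => ∏ i, g i (x i) from rfl] at h
  rw [h]
  rw [← MeasureTheory.integral_indicator (MeasurableSet.univ_pi fun i => measurableSet_Icc)]
  rw [show (Set.indicator (Set.univ.pi fun i => Set.Icc (0:ℝ) (w i))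
      fun y : Fin n → ℝ => ∏ i, g i (y i))
      = fun y : Fin n → ℝ => ∏ i, Set.indicator (Set.Icc (0:ℝ) (w i)) (g i) (y i) from
      funext (indicator_pi_prod n _ g)]
  rw [MeasureTheory.integral_fintype_prod_volume_eq_prod (ι := Fin n)
      (fun i => Set.indicator (Set.Icc (0:ℝ) (w i)) (g i))]
  exact Finset.prod_congr rfl fun i _ =>
    MeasureTheory.integral_indicator measurableSet_Icc

lemma volume_box (n : ℕ) (w : Fin n → ℝ) :
    volume {x : EuclideanSpace ℝ (Fin n) | ∀ i, x i ∈ Set.Icc 0 (w i)}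
      = ∏ i, ENNReal.ofReal (w i) := by
  rw [box_eq_preimage]
  rw [(EuclideanSpace.volume_preserving_symm_measurableEquiv_toLp (Fin n)).measure_preimage
      ((MeasurableSet.univ_pi fun i => measurableSet_Icc).nullMeasurableSet)]
  rw [volume_pi_pi]
  simp [Real.volume_Icc]

lemma measurable_box (n : ℕ) (w : Fin n → ℝ) :
    MeasurableSet {x : EuclideanSpace ℝ (Fin n) | ∀ i, x i ∈ Set.Icc 0 (w i)} := by
  rw [box_eq_preimage]
  exact ((MeasurableEquiv.toLp 2 (Fin n → ℝ)).symm).measurable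
    (MeasurableSet.univ_pi fun i => measurableSet_Icc)

lemma endgame (β q : ℝ) (hβ : 1 ≤ β) (hq : 2 < q) (k P : ℝ) (hk : 1 ≤ k) (hP : 0 < P)
    (N : ℝ) (hN : 1 ≤ N) (hPk : P ≤ 8 * Real.pi ^ 2 * N * k ^ 2) :
    (2:ℝ) ^ (-(β/2)) * (8:ℝ) ^ (-(β/2)) * (8 * Real.pi ^ 2 * N) ^ (-(β/4))
        * P ^ ((β/2) * (1/2 - 1/q)) * (k ^ β) ^ ((1:ℝ)/2)
      ≤ (k * (Real.sqrt 2 / 2)) ^ β * ((1/(8*k)) ^ β) ^ ((1:ℝ)/q) := by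
  have hk0 : (0:ℝ) < k := lt_of_lt_of_le one_pos hk
  have hq0 : (0:ℝ) < q := by linarith
  have hβ0 : (0:ℝ) ≤ β := by linarith
  have hqh : 1/q < 1/2 := by
    rw [div_lt_div_iff₀ hq0 (by norm_num)]; linarith
  have hα0 : 0 ≤ (β/2) * (1/2 - 1/q) := by
    apply mul_nonneg (by linarith)
    linarith
  set α := (β/2) * (1/2 - 1/q) with hα
  have hM1 : (1:ℝ) ≤ 8 * Real.pi ^ 2 * N := by nlinarith [Real.pi_gt_three]
  have hM0 : (0:ℝ) < 8 * Real.pi ^ 2 * N := by linarith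
  have h2s : Real.sqrt 2 * Real.sqrt 2 = 2 := Real.mul_self_sqrt (by norm_num)
  have hs0 : 0 < Real.sqrt 2 := Real.sqrt_pos.mpr (by norm_num)
  have hsqrt : Real.sqrt 2 / 2 = (2:ℝ) ^ (-(1/2) : ℝ) := by
    rw [Real.rpow_neg (by norm_num : (0:ℝ) ≤ 2), ← Real.sqrt_eq_rpow]
    field_simp
    norm_num
  have hRHS : (k * (Real.sqrt 2 / 2)) ^ β * ((1/(8*k)) ^ β) ^ ((1:ℝ)/q)
      = (2:ℝ) ^ (-(β/2)) * ((8:ℝ) ^ (-(β/q)) * (k ^ (β - β/q))) := by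
    rw [Real.mul_rpow hk0.le (by positivity), hsqrt, ← Real.rpow_mul (by norm_num : (0:ℝ) ≤ 2)]
    rw [← Real.rpow_mul (by positivity : (0:ℝ) ≤ 1/(8*k))]
    rw [show (1:ℝ)/(8*k) = (8*k)⁻¹ by ring]
    rw [← Real.rpow_neg_one (8*k), ← Real.rpow_mul (by positivity : (0:ℝ) ≤ 8*k)]
    rw [Real.mul_rpow (by norm_num : (0:ℝ) ≤ 8) hk0.le]
    rw [show β - β/q = β + (-(β/q)) by ring, Real.rpow_add hk0]
    rw [show (-1 : ℝ) * (β * (1/q)) = -(β/q) by ring]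
    ring_nf
  rw [hRHS]
  rw [← Real.rpow_mul hk0.le]
  have hPα : P ^ α ≤ (8 * Real.pi ^ 2 * N) ^ (β/4) * k ^ (2*α) := by
    have h1 : P ^ α ≤ (8 * Real.pi ^ 2 * N * k ^ 2) ^ α :=
      Real.rpow_le_rpow hP.le hPk hα0
    have h2 : (8 * Real.pi ^ 2 * N * k ^ 2) ^ α
        = (8 * Real.pi ^ 2 * N) ^ α * k ^ (2*α) := by
      rw [Real.mul_rpow hM0.le (by positivity)]
      rw [← Real.rpow_natCast k 2, ← Real.rpow_mul hk0.le]
      norm_num [mul_comm]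
    have h3 : (8 * Real.pi ^ 2 * N) ^ α ≤ (8 * Real.pi ^ 2 * N) ^ (β/4) := by
      apply Real.rpow_le_rpow_of_exponent_le hM1
      rw [hα]
      have h1' : (1:ℝ)/2 - 1/q ≤ 1/2 := by
        have : 0 < 1/q := by positivity
        linarith
      have := mul_le_mul_of_nonneg_left h1' (by linarith : (0:ℝ) ≤ β/2)
      linarith
    calc P ^ α ≤ (8 * Real.pi ^ 2 * N) ^ α * k ^ (2*α) := by rw [← h2]; exact h1
      _ ≤ (8 * Real.pi ^ 2 * N) ^ (β/4) * k ^ (2*α) :=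
        mul_le_mul_of_nonneg_right h3 (by positivity)
  have hcancel : (8 * Real.pi ^ 2 * N) ^ (-(β/4)) * (8 * Real.pi ^ 2 * N) ^ (β/4) = 1 := by
    rw [← Real.rpow_add hM0]; simp
  have h8 : (8:ℝ) ^ (-(β/2)) ≤ (8:ℝ) ^ (-(β/q)) := by
    apply Real.rpow_le_rpow_of_exponent_le (by norm_num)
    have : β/q ≤ β/2 := by
      rw [div_le_div_iff₀ hq0 (by norm_num)]
      nlinarith
    linarith
  have hkexp : k ^ (2*α) * k ^ (β * (1/2)) = k ^ (β - β/q) := by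
    rw [← Real.rpow_add hk0]
    congr 1
    rw [hα]; field_simp; ring
  calc (2:ℝ) ^ (-(β/2)) * (8:ℝ) ^ (-(β/2)) * (8 * Real.pi ^ 2 * N) ^ (-(β/4))
        * P ^ α * k ^ (β * (1/2))
      ≤ (2:ℝ) ^ (-(β/2)) * (8:ℝ) ^ (-(β/2)) * (8 * Real.pi ^ 2 * N) ^ (-(β/4))
        * ((8 * Real.pi ^ 2 * N) ^ (β/4) * k ^ (2*α)) * k ^ (β * (1/2)) := by
        apply mul_le_mul_of_nonneg_right _ (by positivity)
        apply mul_le_mul_of_nonneg_left hPα (by positivity)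
    _ = (2:ℝ) ^ (-(β/2)) * (8:ℝ) ^ (-(β/2)) * (k ^ (2*α) * k ^ (β * (1/2))) := by
        rw [show (2:ℝ) ^ (-(β/2)) * (8:ℝ) ^ (-(β/2)) * (8 * Real.pi ^ 2 * N) ^ (-(β/4))
          * ((8 * Real.pi ^ 2 * N) ^ (β/4) * k ^ (2*α)) * k ^ (β * (1/2))
          = (2:ℝ) ^ (-(β/2)) * (8:ℝ) ^ (-(β/2))
            * ((8 * Real.pi ^ 2 * N) ^ (-(β/4)) * (8 * Real.pi ^ 2 * N) ^ (β/4))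
            * (k ^ (2*α) * k ^ (β * (1/2))) by ring]
        rw [hcancel]
        ring
    _ = (2:ℝ) ^ (-(β/2)) * (8:ℝ) ^ (-(β/2)) * k ^ (β - β/q) := by rw [hkexp]
    _ ≤ (2:ℝ) ^ (-(β/2)) * ((8:ℝ) ^ (-(β/q)) * k ^ (β - β/q)) := by
        rw [← mul_assoc]
        apply mul_le_mul_of_nonneg_right _ (by positivity)
        exact mul_le_mul_of_nonneg_left h8 (by positivity)

end TorusSharpAux

set_option maxHeartbeats 1000000 in
/-- **Sharpness of the torus spectral projection bounds** (Proposition 6.1 and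
Remark 6.2 of the paper, specialized to the unit torus): for `n ≥ 2` and
`2 < q ≤ q_c = 2(n+1)/(n-1)` there are `c > 0` and `C₀ ≥ 1` such that for
every integer `m ≥ C₀` and every `ε ∈ [C₀/m, 1]`, with `λ = 2πm`, there is a
nonzero finitely supported `a : ℤⁿ → ℂ` whose frequencies satisfy
`λ ≤ 2π|j| ≤ λ + ε`, with
`‖Σ a_j e_j‖_{L^q([0,1]ⁿ)} ≥ c (ελ)^{((n-1)/2)(1/2-1/q)} ‖Σ a_j e_j‖_{L²}`. -/
theorem torus_spectral_projection_lower_bound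
    (n : ℕ) (hn : 2 ≤ n) (q : ℝ) (hq1 : 2 < q) (hq2 : q ≤ 2 * ((n : ℝ) + 1) / ((n : ℝ) - 1)) :
    ∃ c : ℝ, 0 < c ∧ ∃ C₀ : ℝ, 1 ≤ C₀ ∧
      ∀ m : ℕ, C₀ ≤ (m : ℝ) → ∀ ε : ℝ, C₀ / (m : ℝ) ≤ ε → ε ≤ 1 →
        ∃ a : (Fin n → ℤ) →₀ ℂ, a ≠ 0 ∧
          (∀ j : Fin n → ℤ, a j ≠ 0 →
            2 * Real.pi * (m : ℝ) ≤ unitTorusEigenvalue n j ∧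
            unitTorusEigenvalue n j ≤ 2 * Real.pi * (m : ℝ) + ε) ∧
          ENNReal.ofReal
              (c * (ε * (2 * Real.pi * (m : ℝ))) ^ ((((n : ℝ) - 1) / 2) * (1 / 2 - 1 / q))) *
            eLpNorm
              (fun x : EuclideanSpace ℝ (Fin n) => ∑ j ∈ a.support, a j * unitTorusExp n j x)
              2 (volume.restrict (unitCube n))
          ≤ eLpNorm
              (fun x : EuclideanSpace ℝ (Fin n) => ∑ j ∈ a.support, a j * unitTorusExp n j x)
              (ENNReal.ofReal q) (volume.restrict (unitCube n)) := by
  classical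
  haveI : NeZero n := ⟨by omega⟩
  have hn2 : (2:ℝ) ≤ (n:ℝ) := by exact_mod_cast hn
  have hq0 : (0:ℝ) < q := by linarith
  have hπ3 := Real.pi_gt_three
  have hπ0 := Real.pi_pos
  refine ⟨(2:ℝ) ^ (-(((n:ℝ)-1)/2)) * (8:ℝ) ^ (-(((n:ℝ)-1)/2))
      * (8 * Real.pi ^ 2 * (n:ℝ)) ^ (-(((n:ℝ)-1)/4)), by positivity,
    16 * Real.pi * n, by nlinarith, ?_⟩
  intro m hm ε hε hε1
  have hC0 : (0:ℝ) < 16 * Real.pi * n := by positivity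
  have hm0 : (0:ℝ) < m := lt_of_lt_of_le hC0 hm
  have hε0 : (0:ℝ) < ε := lt_of_lt_of_le (div_pos hC0 hm0) hε
  have hεm : 16 * Real.pi * n ≤ ε * m := by
    rw [div_le_iff₀ hm0] at hε; linarith
  have hπn0 : (0:ℝ) < Real.pi * n := by positivity
  set s : ℝ := Real.sqrt (ε * m / (Real.pi * n)) with hs
  have hsq : s^2 = ε * m / (Real.pi * n) := Real.sq_sqrt (by positivity)
  have hs0 : 0 ≤ s := Real.sqrt_nonneg _
  have hs4 : (4:ℝ) ≤ s := by
    rw [hs, show (4:ℝ) = Real.sqrt 16 by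
      rw [show (16:ℝ) = 4^2 by norm_num, Real.sqrt_sq (by norm_num)]]
    apply Real.sqrt_le_sqrt
    rw [le_div_iff₀ hπn0]
    nlinarith
  set K : ℕ := ⌊s⌋₊ with hKdef
  have hK1 : 1 ≤ K := Nat.le_floor (by exact_mod_cast (by linarith : (1:ℝ) ≤ s))
  have hK1' : (1:ℝ) ≤ (K:ℝ) := by exact_mod_cast hK1
  have hK0 : (0:ℝ) < K := by linarith
  have hKs : (K:ℝ) ≤ s := Nat.floor_le hs0
  have hKhalf : s/2 ≤ (K:ℝ) := by
    have := Nat.sub_one_lt_floor s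
    have h2 : s - 1 < (K:ℝ) := by exact_mod_cast this
    linarith
  have hKsq_le : (K:ℝ)^2 ≤ ε * m / (Real.pi * n) := by nlinarith
  have hKsq_ge : ε * m / (4 * (Real.pi * n)) ≤ (K:ℝ)^2 := by
    have h1 : (s/2) * (s/2) ≤ (K:ℝ) * (K:ℝ) :=
      mul_le_mul hKhalf hKhalf (by positivity) (by linarith)
    have h2 : ε * m / (4 * (Real.pi * n)) = s^2/4 := by rw [hsq]; ring
    rw [h2]
    nlinarith
  -- frequency set
  set F : Fin n → Finset ℤ := fun i => if i = 0 then {(m:ℤ)} else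
    Finset.image (fun k : ℕ => (k:ℤ)) (Finset.range K) with hF
  set B : Finset (Fin n → ℤ) := Fintype.piFinset F with hB
  set a : (Fin n → ℤ) →₀ ℂ := ⟨B, fun j => if j ∈ B then 1 else 0, by
    intro j; by_cases h : j ∈ B <;> simp [h]⟩ with ha
  have haapp : ∀ j, a j = if j ∈ B then 1 else 0 := fun j => rfl
  have hasupp : a.support = B := rfl
  have hj₀ : (fun i : Fin n => if i = 0 then (m:ℤ) else 0) ∈ B := by
    rw [hB, Fintype.mem_piFinset]
    intro i
    by_cases h : i = 0
    · simp [hF, h]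
    · simp only [hF, if_neg h, Finset.mem_image]
      exact ⟨0, Finset.mem_range.mpr hK1, by simp [h]⟩
  have ha0 : a ≠ 0 := by
    intro h
    have h1 : a (fun i : Fin n => if i = 0 then (m:ℤ) else 0) = 0 := by rw [h]; rfl
    rw [haapp, if_pos hj₀] at h1
    exact one_ne_zero h1
  refine ⟨a, ha0, ?_, ?_⟩
  · -- frequency localization
    intro j hj
    have hjB : j ∈ B := by
      by_contra h
      exact hj (by rw [haapp, if_neg h])
    rw [hB, Fintype.mem_piFinset] at hjB
    have hj0 : j 0 = (m:ℤ) := by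
      have := hjB 0; simpa [hF] using this
    have hjbound : ∀ i : Fin n, i ≠ 0 → 0 ≤ j i ∧ (j i : ℝ) ≤ K := by
      intro i hi
      have := hjB i
      rw [hF] at this
      simp only [if_neg hi, Finset.mem_image] at this
      obtain ⟨k, hk, hkj⟩ := this
      have hkK : k < K := Finset.mem_range.mp hk
      constructor
      · rw [← hkj]; exact_mod_cast Nat.zero_le k
      · rw [← hkj]
        have : (k:ℝ) ≤ K := by exact_mod_cast hkK.le
        exact_mod_cast this
    set S : ℝ := ∑ i, ((j i : ℝ))^2 with hS
    have hsplit : S = (m:ℝ)^2 + ∑ i ∈ Finset.univ.erase 0, ((j i:ℝ))^2 := by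
      rw [hS, ← Finset.add_sum_erase _ _ (Finset.mem_univ (0 : Fin n)), hj0]
      push_cast
      ring
    have hrest_nonneg : 0 ≤ ∑ i ∈ Finset.univ.erase (0 : Fin n), ((j i:ℝ))^2 :=
      Finset.sum_nonneg fun i _ => sq_nonneg _
    have hcard : (Finset.univ.erase (0:Fin n)).card = n - 1 := by
      rw [Finset.card_erase_of_mem (Finset.mem_univ _), Finset.card_univ, Fintype.card_fin]
    have hrest_le : ∑ i ∈ Finset.univ.erase (0:Fin n), ((j i:ℝ))^2 ≤ ((n:ℝ) - 1) * (K:ℝ)^2 := by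
      have h1 : ∑ i ∈ Finset.univ.erase (0:Fin n), ((j i:ℝ))^2
          ≤ ∑ _i ∈ Finset.univ.erase (0:Fin n), (K:ℝ)^2 := by
        apply Finset.sum_le_sum
        intro i hi
        obtain ⟨h1, h2⟩ := hjbound i (Finset.ne_of_mem_erase hi)
        have h1' : (0:ℝ) ≤ (j i : ℝ) := by exact_mod_cast h1
        exact pow_le_pow_left₀ h1' h2 2
      rw [Finset.sum_const, hcard, nsmul_eq_mul] at h1
      have hcast : ((n - 1 : ℕ) : ℝ) = (n:ℝ) - 1 := by
        have : (1:ℕ) ≤ n := by omega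
        push_cast [this]
        ring
      rw [hcast] at h1
      exact h1
    have hup2 : S ≤ ((m:ℝ) + ε/(2*Real.pi))^2 := by
      have hK2 : ((n:ℝ) - 1) * (K:ℝ)^2 ≤ ε * m / Real.pi := by
        calc ((n:ℝ) - 1) * (K:ℝ)^2 ≤ ((n:ℝ) - 1) * (ε * m / (Real.pi * n)) := by
              apply mul_le_mul_of_nonneg_left hKsq_le (by linarith)
          _ ≤ (n:ℝ) * (ε * m / (Real.pi * n)) := by
              apply mul_le_mul_of_nonneg_right (by linarith) (by positivity)
          _ = ε * m / Real.pi := by field_simp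
      have hexp : ((m:ℝ) + ε/(2*Real.pi))^2
          = (m:ℝ)^2 + ε*m/Real.pi + (ε/(2*Real.pi))^2 := by
        field_simp
        ring
      rw [hsplit, hexp]
      have := sq_nonneg (ε/(2*Real.pi))
      linarith
    unfold unitTorusEigenvalue
    constructor
    · have h1 : (m:ℝ) ≤ Real.sqrt S := by
        rw [show (m:ℝ) = Real.sqrt ((m:ℝ)^2) from (Real.sqrt_sq hm0.le).symm]
        apply Real.sqrt_le_sqrt
        rw [hsplit]
        linarith
      rw [← hS]
      nlinarith
    · have h2 : Real.sqrt S ≤ (m:ℝ) + ε/(2*Real.pi) := by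
        rw [show (m:ℝ) + ε/(2*Real.pi)
            = Real.sqrt (((m:ℝ) + ε/(2*Real.pi))^2) from (Real.sqrt_sq (by positivity)).symm]
        exact Real.sqrt_le_sqrt hup2
      rw [← hS]
      calc 2 * Real.pi * Real.sqrt S ≤ 2 * Real.pi * ((m:ℝ) + ε/(2*Real.pi)) := by
            apply mul_le_mul_of_nonneg_left h2 (by positivity)
        _ = 2 * Real.pi * m + ε := by field_simp
  · -- the norm inequality
    set g : Fin n → ℝ → ℂ :=
      fun i s => ∑ v ∈ F i, Complex.exp (2 * Real.pi * Complex.I * (v:ℂ) * s) with hg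
    have hfact : ∀ x : EuclideanSpace ℝ (Fin n),
        (∑ j ∈ a.support, a j * unitTorusExp n j x) = ∏ i, g i (x i) := by
      intro x
      rw [hasupp]
      rw [Finset.sum_congr rfl (fun j hj => by rw [haapp, if_pos hj, one_mul])]
      rw [hg]
      rw [Finset.prod_univ_sum F
        (fun i v => Complex.exp (2 * Real.pi * Complex.I * (v:ℂ) * (x i)))]
      rw [← hB]
      refine Finset.sum_congr rfl fun j _ => ?_
      rw [show (∏ i, Complex.exp (2 * Real.pi * Complex.I * ((j i : ℤ):ℂ) * (x i)))
          = Complex.exp (∑ i, 2 * Real.pi * Complex.I * ((j i : ℤ):ℂ) * (x i)) from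
        (Complex.exp_sum _ _).symm]
      unfold unitTorusExp
      congr 1
      push_cast
      rw [Finset.mul_sum]
      refine Finset.sum_congr rfl fun i _ => by ring
    have hg0 : ∀ t : ℝ, ‖g 0 t‖ = 1 := by
      intro t
      rw [hg]
      simp only [hF, if_pos rfl, Finset.sum_singleton]
      rw [show (2 * Real.pi * Complex.I * (((m:ℤ) : ℂ)) * (t:ℂ))
          = 2 * Real.pi * Complex.I * (((m:ℝ) * t : ℝ) : ℂ) by push_cast; ring]
      exact TorusSharpAux.norm_exp_I_mul _
    have hgD : ∀ i : Fin n, i ≠ 0 → ∀ t : ℝ, g i t = TorusSharpAux.D K t := by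
      intro i hi t
      rw [hg]
      simp only [hF, if_neg hi]
      rw [Finset.sum_image (by intro k _ k' _ h; simpa using h)]
      unfold TorusSharpAux.D
      refine Finset.sum_congr rfl fun k _ => ?_
      norm_cast
    set f : EuclideanSpace ℝ (Fin n) → ℂ :=
      fun x => ∑ j ∈ a.support, a j * unitTorusExp n j x with hfdef
    have hcont : Continuous f := by
      rw [hfdef]
      apply continuous_finset_sum
      intro j _
      apply Continuous.mul continuous_const
      unfold unitTorusExp
      apply Complex.continuous_exp.comp
      apply Continuous.mul continuous_const
      apply Complex.continuous_ofReal.comp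
      apply continuous_finset_sum
      intro i _
      exact continuous_const.mul (EuclideanSpace.proj (𝕜 := ℝ) (i : Fin n)).continuous
    -- L² computation
    have hQvol : volume (unitCube n) = 1 := by
      have h1 : unitCube n
          = {x : EuclideanSpace ℝ (Fin n) | ∀ i, x i ∈ Set.Icc 0 ((fun _ => (1:ℝ)) i)} := rfl
      rw [h1, TorusSharpAux.volume_box]
      simp
    have hI2 : ∫ x in unitCube n, ‖f x‖^2 = (K:ℝ)^(n-1) := by
      have hpt : ∀ x, ‖f x‖^2 = ∏ i, ‖g i (x i)‖^2 := by
        intro x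
        rw [hfdef]
        simp only
        rw [hfact x, norm_prod]
        rw [← Finset.prod_pow]
      rw [show (fun x : EuclideanSpace ℝ (Fin n) => ‖f x‖^2)
          = fun x => ∏ i, ‖g i (x i)‖^2 from funext hpt]
      have h1 : unitCube n
          = {x : EuclideanSpace ℝ (Fin n) | ∀ i, x i ∈ Set.Icc 0 ((fun _ => (1:ℝ)) i)} := rfl
      rw [h1]
      rw [TorusSharpAux.box_integral n (fun i s => ‖g i s‖^2) (fun _ => 1)]
      have hval : ∀ i : Fin n, (∫ t in Set.Icc (0:ℝ) 1, ‖g i t‖^2)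
          = if i = 0 then (1:ℝ) else (K:ℝ) := by
        intro i
        by_cases h : i = 0
        · subst h
          rw [if_pos rfl]
          rw [show (fun t : ℝ => ‖g 0 t‖^2) = fun _ : ℝ => (1:ℝ) from
            funext fun t => by rw [hg0 t]; norm_num]
          simp [Real.volume_Icc]
        · rw [if_neg h]
          rw [show (fun t : ℝ => ‖g i t‖^2) = fun t : ℝ => ‖TorusSharpAux.D K t‖^2 from
            funext fun t => by rw [hgD i h]]
          exact TorusSharpAux.integral_normSq_D K
      rw [Finset.prod_congr rfl fun i _ => hval i]
      rw [← Finset.mul_prod_erase _ _ (Finset.mem_univ (0 : Fin n)), if_pos rfl, one_mul]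
      rw [Finset.prod_congr rfl fun i hi => if_neg (Finset.ne_of_mem_erase hi)]
      rw [Finset.prod_const]
      congr 1
      rw [Finset.card_erase_of_mem (Finset.mem_univ _), Finset.card_univ, Fintype.card_fin]
    have hbnd : ∀ x, ‖f x‖ ≤ (B.card : ℝ) := by
      intro x
      rw [hfdef]
      simp only
      calc ‖∑ j ∈ B, a j * unitTorusExp n j x‖ ≤ ∑ j ∈ B, ‖a j * unitTorusExp n j x‖ :=
            norm_sum_le _ _
        _ ≤ ∑ _j ∈ B, (1:ℝ) := by
            apply Finset.sum_le_sum
            intro j hj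
            rw [haapp, if_pos hj, one_mul]
            unfold unitTorusExp
            exact le_of_eq (TorusSharpAux.norm_exp_I_mul _)
        _ = (B.card : ℝ) := by rw [Finset.sum_const]; simp
    have hint2 : IntegrableOn (fun x => ‖f x‖^2) (unitCube n) volume := by
      apply Measure.integrableOn_of_bounded (M := (B.card:ℝ)^2)
        (s_finite := by rw [hQvol]; exact ENNReal.one_ne_top)
        (f_mble := ((hcont.norm.pow 2)).aestronglyMeasurable)
      · apply Filter.Eventually.of_forall
        intro x
        have h1 := hbnd x
        have h2 : (0:ℝ) ≤ ‖f x‖ := norm_nonneg _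
        simp only [Pi.pow_apply]
        rw [Real.norm_eq_abs, abs_of_nonneg (by positivity)]
        nlinarith
    have h2norm : eLpNorm f 2 (volume.restrict (unitCube n))
        = ENNReal.ofReal (((K:ℝ)^(n-1)) ^ ((1:ℝ)/2)) := by
      rw [eLpNorm_eq_lintegral_rpow_enorm_toReal (by norm_num) (by norm_num)]
      simp_rw [enorm_eq_nnnorm]
      have htR : (2:ℝ≥0∞).toReal = 2 := by simp
      rw [htR]
      have hlint : (∫⁻ x in unitCube n, ((‖f x‖₊ : ℝ≥0∞)) ^ (2:ℝ) ∂volume)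
          = ENNReal.ofReal ((K:ℝ)^(n-1)) := by
        have hptw : ∀ x, ((‖f x‖₊ : ℝ≥0∞)) ^ (2:ℝ) = ENNReal.ofReal (‖f x‖^2) := by
          intro x
          rw [← enorm_eq_nnnorm, ← ofReal_norm]
          rw [ENNReal.ofReal_pow (norm_nonneg _)]
          rw [← ENNReal.rpow_natCast (ENNReal.ofReal ‖f x‖) 2]
          norm_num
        simp_rw [hptw]
        rw [← ofReal_integral_eq_lintegral_ofReal hint2
          (Filter.Eventually.of_forall fun x => by positivity)]
        rw [hI2]
      rw [hlint]
      rw [← ENNReal.ofReal_rpow_of_pos (by positivity)]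
    -- Lq lower bound
    set w : Fin n → ℝ := fun i => if i = 0 then (1:ℝ) else 1/(8*(K:ℝ)) with hw
    set T : Set (EuclideanSpace ℝ (Fin n)) := {x | ∀ i, x i ∈ Set.Icc 0 (w i)} with hT
    have hw_nonneg : ∀ i, 0 ≤ w i := by
      intro i
      rw [hw]
      by_cases h : i = 0 <;> simp [h] <;> positivity
    have hw_le_one : ∀ i, w i ≤ 1 := by
      intro i
      rw [hw]
      by_cases h : i = 0
      · simp [h]
      · simp only [if_neg h]
        rw [div_le_one (by positivity)]
        linarith
    have hTQ : T ⊆ unitCube n := by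
      intro x hx i
      obtain ⟨h1, h2⟩ := hx i
      exact ⟨h1, le_trans h2 (hw_le_one i)⟩
    have hprod : (∏ i, w i) = (1/(8*(K:ℝ)))^(n-1) := by
      rw [← Finset.mul_prod_erase _ _ (Finset.mem_univ (0 : Fin n))]
      have h0 : w 0 = 1 := by rw [hw]; simp
      have hrest : ∀ i ∈ Finset.univ.erase (0:Fin n), w i = 1/(8*(K:ℝ)) := by
        intro i hi
        rw [hw]
        simp [Finset.ne_of_mem_erase hi]
      rw [h0, one_mul, Finset.prod_congr rfl hrest, Finset.prod_const,
        Finset.card_erase_of_mem (Finset.mem_univ _), Finset.card_univ, Fintype.card_fin]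
    have hvolT : volume T = ENNReal.ofReal ((1/(8*(K:ℝ)))^(n-1)) := by
      rw [hT, TorusSharpAux.volume_box]
      rw [← ENNReal.ofReal_prod_of_nonneg (fun i _ => hw_nonneg i), hprod]
    have hL : ∀ x ∈ T, ((K:ℝ) * (Real.sqrt 2/2))^(n-1) ≤ ‖f x‖ := by
      intro x hx
      rw [hfdef]
      simp only
      rw [hfact x, norm_prod]
      have hbound : ∀ i : Fin n,
          (if i = 0 then (1:ℝ) else (K:ℝ) * (Real.sqrt 2/2)) ≤ ‖g i (x i)‖ := by
        intro i
        by_cases h : i = 0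
        · subst h; rw [if_pos rfl, hg0]
        · rw [if_neg h, hgD i h]
          apply TorusSharpAux.norm_D_ge
          have := hx i
          rw [hw] at this
          simpa [if_neg h] using this
      calc ((K:ℝ) * (Real.sqrt 2/2))^(n-1)
          = ∏ i : Fin n, (if i = 0 then (1:ℝ) else (K:ℝ) * (Real.sqrt 2/2)) := by
            rw [← Finset.mul_prod_erase _ _ (Finset.mem_univ (0 : Fin n)), if_pos rfl, one_mul]
            rw [Finset.prod_congr rfl fun i hi => if_neg (Finset.ne_of_mem_erase hi)]
            rw [Finset.prod_const]
            congr 1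
            rw [Finset.card_erase_of_mem (Finset.mem_univ _), Finset.card_univ, Fintype.card_fin]
        _ ≤ ∏ i : Fin n, ‖g i (x i)‖ := by
            apply Finset.prod_le_prod
            · intro i _
              by_cases h : i = 0
              · simp [h]
              · simp only [if_neg h]
                positivity
            · intro i _
              exact hbound i
    set p : ℝ≥0∞ := ENNReal.ofReal q with hp
    have hp0 : p ≠ 0 := by
      rw [hp]
      simp only [ne_eq, ENNReal.ofReal_eq_zero, not_le]
      linarith
    have hptop : p ≠ ⊤ := ENNReal.ofReal_ne_top
    have hpR : p.toReal = q := ENNReal.toReal_ofReal hq0.le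
    set L : ℝ := ((K:ℝ) * (Real.sqrt 2/2))^(n-1) with hLdef
    have hL0 : 0 < L := by
      rw [hLdef]
      positivity
    set V : ℝ := (1/(8*(K:ℝ)))^(n-1) with hVdef
    have hV0 : 0 < V := by rw [hVdef]; positivity
    have hq_lower : ENNReal.ofReal (L * V ^ ((1:ℝ)/q))
        ≤ eLpNorm f p (volume.restrict (unitCube n)) := by
      rw [eLpNorm_eq_lintegral_rpow_enorm_toReal hp0 hptop, hpR]
      simp_rw [enorm_eq_nnnorm]
      have hmono : (∫⁻ x in T, ((‖f x‖₊ : ℝ≥0∞)) ^ q ∂volume)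
          ≤ ∫⁻ x in unitCube n, ((‖f x‖₊ : ℝ≥0∞)) ^ q ∂volume :=
        lintegral_mono' (Measure.restrict_mono hTQ le_rfl) le_rfl
      have hTmeas : MeasurableSet T := by
        rw [hT]; exact TorusSharpAux.measurable_box n w
      have hconst : (ENNReal.ofReal L) ^ q * volume T
          ≤ ∫⁻ x in T, ((‖f x‖₊ : ℝ≥0∞)) ^ q ∂volume := by
        rw [← setLIntegral_const T ((ENNReal.ofReal L) ^ q)]
        apply setLIntegral_mono' hTmeas
        intro x hx
        apply ENNReal.rpow_le_rpow _ hq0.le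
        rw [← enorm_eq_nnnorm, ← ofReal_norm]
        exact ENNReal.ofReal_le_ofReal (hL x hx)
      calc ENNReal.ofReal (L * V ^ ((1:ℝ)/q))
          = ENNReal.ofReal L * ENNReal.ofReal (V ^ ((1:ℝ)/q)) :=
            ENNReal.ofReal_mul hL0.le
        _ = ((ENNReal.ofReal L) ^ q * volume T) ^ ((1:ℝ)/q) := by
            rw [hvolT, ENNReal.mul_rpow_of_nonneg _ _ (by positivity),
              ← ENNReal.rpow_mul, mul_one_div_cancel (ne_of_gt hq0), ENNReal.rpow_one,
              ENNReal.ofReal_rpow_of_pos hV0]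
        _ ≤ (∫⁻ x in T, ((‖f x‖₊ : ℝ≥0∞)) ^ q ∂volume) ^ ((1:ℝ)/q) :=
            ENNReal.rpow_le_rpow hconst (by positivity)
        _ ≤ (∫⁻ x in unitCube n, ((‖f x‖₊ : ℝ≥0∞)) ^ q ∂volume) ^ ((1:ℝ)/q) :=
            ENNReal.rpow_le_rpow hmono (by positivity)
    -- combine
    rw [h2norm]
    refine le_trans ?_ hq_lower
    rw [← ENNReal.ofReal_mul (by positivity)]
    apply ENNReal.ofReal_le_ofReal
    have hnat : ((n - 1 : ℕ) : ℝ) = (n:ℝ) - 1 := by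
      have : (1:ℕ) ≤ n := by omega
      push_cast [this]
      ring
    have hPk : ε * (2 * Real.pi * m) ≤ 8 * Real.pi ^ 2 * (n:ℝ) * (K:ℝ)^2 := by
      rw [div_le_iff₀ (by positivity)] at hKsq_ge
      nlinarith
    have := TorusSharpAux.endgame ((n:ℝ)-1) q (by linarith) hq1 (K:ℝ)
      (ε * (2 * Real.pi * m)) hK1' (by positivity) (n:ℝ) (by linarith) hPk
    -- convert nat powers to rpow
    have hKpow : ((K:ℝ)^(n-1) : ℝ) = (K:ℝ) ^ ((n:ℝ)-1) := by
      rw [← Real.rpow_natCast (K:ℝ) (n-1), hnat]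
    have hLpow : L = ((K:ℝ) * (Real.sqrt 2/2)) ^ ((n:ℝ)-1) := by
      rw [hLdef, ← Real.rpow_natCast _ (n-1), hnat]
    have hVpow : V = ((1:ℝ)/(8*(K:ℝ))) ^ ((n:ℝ)-1) := by
      rw [hVdef, ← Real.rpow_natCast _ (n-1), hnat]
    rw [hKpow, hLpow, hVpow]
    exact this
end

section
/- Lattice point count in a tube (cardinality bound for the set D_main in equation (5.19)/(jellcondition) of the paper). For every n ≥ 1 there is a constant C' = C'(n) such that for all ℓ = (ℓ₁,…,ℓₙ) with each ℓᵢ ≥ 1, every v ∈ ℝⁿ, every unit vector ν ∈ ℝⁿ, and all reals μ ≥ 1 and A ≥ 1, the number of j ∈ ℤⁿ satisfying both μ/2 ≤ |v − j_ℓ| ≤ 2μ and |(v − j_ℓ)/|v − j_ℓ| − ν| ≤ A/μ is at most C' A^{n−1} μ, where j_ℓ = (ℓ₁j₁, …, ℓₙjₙ) and |·| is the Euclidean norm. -/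
private lemma abs_le_sqrt_sum {n : ℕ} (f : Fin n → ℝ) (i : Fin n) :
    |f i| ≤ Real.sqrt (∑ i', f i' ^ 2) := by
  rw [← Real.sqrt_sq_eq_abs]
  exact Real.sqrt_le_sqrt (Finset.single_le_sum (fun j _ => sq_nonneg (f j)) (Finset.mem_univ i))

set_option maxHeartbeats 1000000 in
/-- **Lattice point count in a tube** (cardinality bound for the set `D_main`
in (5.19)/(jellcondition) of the paper): for every `n ≥ 1` there is
`C' = C'(n)` such that for all side lengths `ℓᵢ ≥ 1`, every `v ∈ ℝⁿ`, every
unit vector `ν`, and all `μ ≥ 1`, `A ≥ 1`, the number of `j ∈ ℤⁿ` with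
`μ/2 ≤ |v - j_ℓ| ≤ 2μ` and `|(v - j_ℓ)/|v - j_ℓ| - ν| ≤ A/μ` is at most
`C' A^{n-1} μ` (Euclidean norms, `j_ℓ = (ℓ₁j₁,…,ℓₙjₙ)`). -/
theorem stretched_lattice_tube_count (n : ℕ) (hn : 1 ≤ n) :
    ∃ C' : ℝ, 0 < C' ∧
      ∀ ℓ : Fin n → ℝ, (∀ i, 1 ≤ ℓ i) →
      ∀ v : Fin n → ℝ, ∀ ν : Fin n → ℝ, Real.sqrt (∑ i, ν i ^ 2) = 1 →
      ∀ μ A : ℝ, 1 ≤ μ → 1 ≤ A →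
        {j : Fin n → ℤ |
            μ / 2 ≤ Real.sqrt (∑ i, (v i - ℓ i * (j i : ℝ)) ^ 2) ∧
            Real.sqrt (∑ i, (v i - ℓ i * (j i : ℝ)) ^ 2) ≤ 2 * μ ∧
            Real.sqrt (∑ i,
                ((v i - ℓ i * (j i : ℝ)) / Real.sqrt (∑ i', (v i' - ℓ i' * (j i' : ℝ)) ^ 2)
                  - ν i) ^ 2) ≤ A / μ}.Finite ∧
        (({j : Fin n → ℤ |
            μ / 2 ≤ Real.sqrt (∑ i, (v i - ℓ i * (j i : ℝ)) ^ 2) ∧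
            Real.sqrt (∑ i, (v i - ℓ i * (j i : ℝ)) ^ 2) ≤ 2 * μ ∧
            Real.sqrt (∑ i,
                ((v i - ℓ i * (j i : ℝ)) / Real.sqrt (∑ i', (v i' - ℓ i' * (j i' : ℝ)) ^ 2)
                  - ν i) ^ 2) ≤ A / μ}.ncard : ℝ)) ≤ C' * A ^ (n - 1) * μ := by
  refine ⟨5 * (9 * Real.sqrt n) ^ (n - 1), by positivity, ?_⟩
  intro ℓ hℓ v ν hν μ A hμ hA
  set S : Set (Fin n → ℤ) :=
    {j : Fin n → ℤ |
        μ / 2 ≤ Real.sqrt (∑ i, (v i - ℓ i * (j i : ℝ)) ^ 2) ∧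
        Real.sqrt (∑ i, (v i - ℓ i * (j i : ℝ)) ^ 2) ≤ 2 * μ ∧
        Real.sqrt (∑ i,
            ((v i - ℓ i * (j i : ℝ)) / Real.sqrt (∑ i', (v i' - ℓ i' * (j i' : ℝ)) ^ 2)
              - ν i) ^ 2) ≤ A / μ} with hS
  have hμ0 : (0:ℝ) < μ := lt_of_lt_of_le one_pos hμ
  have hA0 : (0:ℝ) < A := lt_of_lt_of_le one_pos hA
  have hn0 : (0:ℝ) < (n:ℝ) := by exact_mod_cast hn
  have hsqn : (1:ℝ) ≤ Real.sqrt n := by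
    rw [show (1:ℝ) = Real.sqrt 1 by simp]
    exact Real.sqrt_le_sqrt (by exact_mod_cast hn)
  have hsqn0 : (0:ℝ) < Real.sqrt n := by linarith
  -- sum of squares of ν is 1
  have hn1 : (1:ℝ) ≤ (n:ℝ) := by exact_mod_cast hn
  have hνsum : ∑ i, ν i ^ 2 = 1 := by
    have h : Real.sqrt (∑ i, ν i ^ 2) ^ 2 = ∑ i, ν i ^ 2 :=
      Real.sq_sqrt (Finset.sum_nonneg fun i _ => sq_nonneg (ν i))
    rw [hν] at h
    simpa using h.symm
  have hν1 : ∀ i, |ν i| ≤ 1 := fun i => by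
    have h := abs_le_sqrt_sum ν i
    rwa [hν] at h
  -- choose a coordinate where ν is large
  obtain ⟨i₀, -, hi₀⟩ := Finset.exists_max_image Finset.univ (fun i => ν i ^ 2)
    ⟨⟨0, hn⟩, Finset.mem_univ _⟩
  have hmax : ∀ i, ν i ^ 2 ≤ ν i₀ ^ 2 := fun i => hi₀ i (Finset.mem_univ i)
  have h1n : (1:ℝ) ≤ n * ν i₀ ^ 2 := by
    calc (1:ℝ) = ∑ i, ν i ^ 2 := hνsum.symm
      _ ≤ ∑ _i : Fin n, ν i₀ ^ 2 := Finset.sum_le_sum fun i _ => hmax i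
      _ = n * ν i₀ ^ 2 := by rw [Finset.sum_const, Finset.card_univ, Fintype.card_fin]; ring
  have hνi₀sq : 0 < ν i₀ ^ 2 := by nlinarith
  have hν₀ne : ν i₀ ≠ 0 := fun h => by rw [h] at hνi₀sq; simp at hνi₀sq
  have hratio : ∀ i, |ν i / ν i₀| ≤ Real.sqrt n := by
    intro i
    have hsq : (ν i / ν i₀) ^ 2 ≤ (n:ℝ) := by
      rw [div_pow, div_le_iff₀ hνi₀sq]
      nlinarith [hmax i, mul_nonneg (by linarith : (0:ℝ) ≤ (n:ℝ) - 1) (le_of_lt hνi₀sq)]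
    calc |ν i / ν i₀| = Real.sqrt ((ν i / ν i₀) ^ 2) := (Real.sqrt_sq_eq_abs _).symm
      _ ≤ Real.sqrt n := Real.sqrt_le_sqrt hsq
  -- key quantities
  set A' := min A (2*μ) with hA'
  have hA'pos : 0 < A' := lt_min hA0 (by linarith)
  have hA'leA : A' ≤ A := min_le_left _ _
  set B := 4 * Real.sqrt n * A' with hB
  have hB0 : 0 < B := by positivity
  set k₁ := ⌈(v i₀ - 2*μ)/ℓ i₀⌉ with hk₁
  set k₂ := ⌊(v i₀ + 2*μ)/ℓ i₀⌋ with hk₂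
  set M := ⌊2*B⌋ with hM
  set lo : ℤ → Fin n → ℝ := fun k i =>
    (ν i * ℓ i₀ / ν i₀ * (k:ℝ) + (v i - ν i / ν i₀ * v i₀) - B) / ℓ i with hlo
  set Φ : (Fin n → ℤ) → (Fin n → ℤ) :=
    fun j i => j i - (if i = i₀ then 0 else ⌈lo (j i₀) i⌉) with hΦ
  set Box : Finset (Fin n → ℤ) :=
    Fintype.piFinset (fun i => if i = i₀ then Finset.Icc k₁ k₂ else Finset.Icc 0 M) with hBox
  have hΦinj : Function.Injective Φ := by
    intro j j' h
    have h₀ : j i₀ = j' i₀ := by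
      have h' := congrFun h i₀
      simpa [hΦ] using h'
    funext i
    have h' := congrFun h i
    simp only [hΦ] at h'
    rw [h₀] at h'
    exact sub_left_inj.mp h'
  -- main inclusion
  have hsub : S ⊆ Φ ⁻¹' ↑Box := by
    rintro j ⟨h1, h2, h3⟩
    set N := Real.sqrt (∑ i, (v i - ℓ i * (j i : ℝ)) ^ 2) with hN
    have hN0 : 0 < N := lt_of_lt_of_le (by linarith) h1
    have hx : ∀ i, |v i - ℓ i * (j i : ℝ)| ≤ N :=
      fun i => abs_le_sqrt_sum (fun i => v i - ℓ i * (j i : ℝ)) i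
    have hang : ∀ i, |(v i - ℓ i * (j i : ℝ))/N - ν i| ≤ A / μ := fun i =>
      le_trans (abs_le_sqrt_sum (fun i => (v i - ℓ i * (j i : ℝ))/N - ν i) i) h3
    set e : Fin n → ℝ := fun i => (v i - ℓ i * (j i : ℝ)) - N * ν i with he
    have heb : ∀ i, |e i| ≤ 2 * A' := by
      intro i
      have h2A : |e i| ≤ 2 * A := by
        have heq : e i = N * ((v i - ℓ i * (j i : ℝ))/N - ν i) := by
          simp only [he]; field_simp
        rw [heq, abs_mul, abs_of_pos hN0]
        calc N * |(v i - ℓ i * (j i : ℝ))/N - ν i| ≤ N * (A / μ) :=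
              mul_le_mul_of_nonneg_left (hang i) (le_of_lt hN0)
          _ ≤ (2*μ) * (A / μ) := by
              apply mul_le_mul_of_nonneg_right h2 (by positivity)
          _ = 2 * A := by field_simp
      have h4μ : |e i| ≤ 4 * μ := by
        have hxi := hx i
        have hνi := hν1 i
        have habs : |e i| ≤ |v i - ℓ i * (j i : ℝ)| + N * |ν i| := by
          simp only [he]
          calc |(v i - ℓ i * (j i : ℝ)) - N * ν i|
              ≤ |v i - ℓ i * (j i : ℝ)| + |N * ν i| := abs_sub _ _
            _ = |v i - ℓ i * (j i : ℝ)| + N * |ν i| := by rw [abs_mul, abs_of_pos hN0]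
        nlinarith
      rcases le_total A (2*μ) with h | h
      · rw [hA', min_eq_left h]; exact h2A
      · rw [hA', min_eq_right h]
        calc |e i| ≤ 4*μ := h4μ
          _ = 2*(2*μ) := by ring
    -- membership at i₀
    have hmem₀ : j i₀ ∈ Finset.Icc k₁ k₂ := by
      have hx0 : |v i₀ - ℓ i₀ * (j i₀ : ℝ)| ≤ 2*μ := le_trans (hx i₀) h2
      have hl := hℓ i₀
      have hl0 : (0:ℝ) < ℓ i₀ := by linarith
      obtain ⟨hxa, hxb⟩ := abs_le.mp hx0
      rw [Finset.mem_Icc]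
      constructor
      · rw [hk₁]
        apply Int.ceil_le.mpr
        rw [div_le_iff₀ hl0]
        nlinarith
      · rw [hk₂]
        apply Int.le_floor.mpr
        rw [le_div_iff₀ hl0]
        nlinarith
    -- membership at i ≠ i₀
    have hmem : ∀ i, i ≠ i₀ → j i - ⌈lo (j i₀) i⌉ ∈ Finset.Icc (0:ℤ) M := by
      intro i hne
      have hl := hℓ i
      have hl0 : (0:ℝ) < ℓ i := by linarith
      set y := ν i * ℓ i₀ / ν i₀ * ((j i₀ : ℤ):ℝ) + (v i - ν i / ν i₀ * v i₀) with hy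
      have key : ℓ i * (j i : ℝ) - y = ν i / ν i₀ * e i₀ - e i := by
        simp only [hy, he]
        field_simp
        ring
      have hkb : |ν i / ν i₀ * e i₀ - e i| ≤ B := by
        calc |ν i / ν i₀ * e i₀ - e i| ≤ |ν i / ν i₀ * e i₀| + |e i| := abs_sub _ _
          _ = |ν i / ν i₀| * |e i₀| + |e i| := by rw [abs_mul]
          _ ≤ Real.sqrt n * (2*A') + 2*A' := by
              have := hratio i
              have := heb i₀
              have := heb i
              have h0 : (0:ℝ) ≤ |e i₀| := abs_nonneg _
              nlinarith
          _ ≤ B := by rw [hB]; nlinarith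
      have hb : |ℓ i * (j i : ℝ) - y| ≤ B := key ▸ hkb
      obtain ⟨hba, hbb⟩ := abs_le.mp hb
      have hloeq : lo (j i₀) i = (y - B) / ℓ i := by simp only [hlo, hy]
      have hlow : lo (j i₀) i ≤ ((j i : ℤ) : ℝ) := by
        rw [hloeq, div_le_iff₀ hl0]
        nlinarith
      have hup : ((j i : ℤ) : ℝ) ≤ lo (j i₀) i + 2*B := by
        have hu1 : ((j i : ℤ) : ℝ) ≤ (y + B) / ℓ i := by
          rw [le_div_iff₀ hl0]; nlinarith
        have hu2 : (y + B)/ℓ i = (y - B)/ℓ i + (2*B)/ℓ i := by ring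
        have hu3 : (2*B)/ℓ i ≤ 2*B := div_le_self (by linarith) hl
        rw [hloeq]; linarith
      rw [Finset.mem_Icc]
      constructor
      · have : ⌈lo (j i₀) i⌉ ≤ j i := Int.ceil_le.mpr hlow
        omega
      · rw [hM]
        apply Int.le_floor.mpr
        push_cast
        have := Int.le_ceil (lo (j i₀) i)
        linarith
    -- assemble
    simp only [Set.mem_preimage, Finset.mem_coe, hBox, Fintype.mem_piFinset]
    intro i
    by_cases hi : i = i₀
    · subst hi
      simpa [hΦ] using hmem₀
    · simp only [hΦ, if_neg hi]
      exact hmem i hi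
  have hfin : S.Finite :=
    Set.Finite.subset (Set.Finite.preimage hΦinj.injOn Box.finite_toSet) hsub
  refine ⟨hfin, ?_⟩
  -- cardinality bound
  have hcard : S.ncard ≤ Box.card := by
    rw [← Set.ncard_coe_finset, ← Set.ncard_image_of_injective S hΦinj]
    exact Set.ncard_le_ncard (Set.image_subset_iff.mpr hsub) Box.finite_toSet
  have hboxcard : Box.card = (Finset.Icc k₁ k₂).card * (Finset.Icc (0:ℤ) M).card ^ (n-1) := by
    rw [hBox, Fintype.card_piFinset,
      ← Finset.mul_prod_erase Finset.univ _ (Finset.mem_univ i₀), if_pos rfl]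
    congr 1
    rw [Finset.prod_congr rfl
      (fun i hi => by rw [if_neg (Finset.ne_of_mem_erase hi)]),
      Finset.prod_const, Finset.card_erase_of_mem (Finset.mem_univ i₀),
      Finset.card_univ, Fintype.card_fin]
  -- real bounds on the two factors
  have hIcc1 : ((Finset.Icc k₁ k₂).card : ℝ) ≤ 5 * μ := by
    rw [Int.card_Icc]
    have hl := hℓ i₀
    have hl0 : (0:ℝ) < ℓ i₀ := by linarith
    have hub : ((k₂ + 1 - k₁ : ℤ) : ℝ) ≤ 5 * μ := by
      push_cast
      have h1 : ((k₂:ℤ):ℝ) ≤ (v i₀ + 2*μ)/ℓ i₀ := Int.floor_le _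
      have h2 : (v i₀ - 2*μ)/ℓ i₀ ≤ ((k₁:ℤ):ℝ) := Int.le_ceil _
      have h3 : (v i₀ + 2*μ)/ℓ i₀ - (v i₀ - 2*μ)/ℓ i₀ = (4*μ)/ℓ i₀ := by ring
      have h4 : (4*μ)/ℓ i₀ ≤ 4*μ := div_le_self (by linarith) hl
      linarith
    have hcast : (((k₂ + 1 - k₁).toNat : ℤ) : ℝ) ≤ 5*μ := by
      rw [Int.toNat_eq_max]
      push_cast
      refine max_le ?_ (by positivity)
      push_cast at hub ⊢
      linarith
    exact_mod_cast hcast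
  have hIcc2 : ((Finset.Icc (0:ℤ) M).card : ℝ) ≤ 9 * Real.sqrt n * A := by
    rw [Int.card_Icc]
    have hub : ((M + 1 - 0 : ℤ) : ℝ) ≤ 9 * Real.sqrt n * A := by
      push_cast
      have h1 : ((M:ℤ):ℝ) ≤ 2*B := Int.floor_le _
      have h2 : 2*B ≤ 8 * Real.sqrt n * A := by rw [hB]; nlinarith
      nlinarith
    have hcast : (((M + 1 - 0).toNat : ℤ) : ℝ) ≤ 9 * Real.sqrt n * A := by
      rw [Int.toNat_eq_max]
      push_cast
      refine max_le ?_ (by positivity)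
      push_cast at hub ⊢
      linarith
    exact_mod_cast hcast
  calc (S.ncard : ℝ) ≤ (Box.card : ℝ) := by exact_mod_cast hcard
    _ = ((Finset.Icc k₁ k₂).card : ℝ) * ((Finset.Icc (0:ℤ) M).card : ℝ) ^ (n-1) := by
        rw [hboxcard]; push_cast; ring
    _ ≤ (5*μ) * (9 * Real.sqrt n * A) ^ (n-1) := by
        apply mul_le_mul hIcc1 (pow_le_pow_left₀ (by positivity) hIcc2 _)
          (by positivity) (by positivity)
    _ = 5 * (9 * Real.sqrt n) ^ (n-1) * A ^ (n-1) * μ := by rw [mul_pow]; ring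
end
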